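/- arXiv:1805.02741 — 4 statements merged into one kernel-verified Lean document; each statement's English description precedes it below -/
import Mathlib

section
/- Fix A, k, σ, γ, η, c > 0, an integer bound q̄ ≥ 1, an integer q with |q| ≤ q̄, and reals y, y₊, y₋ < 0. Define Δ(z) := max(−δ∞, min(δ∞, −z + (1/γ)·log(1+σγ/k))), H¹_E(q,y) := sup_{z∈ℝ} (ησ²/2)·y·(γ(z+q)² + ηz²), H⁰_E(y,y') := sup_{ζ∈ℝ} A e^{−k(Δ(ζ)+c)/σ}·[ y' e^{η(ζ−c)} − y( 1 + (η/γ)(1 − e^{−γ(ζ+Δ(ζ))}) ) ], and H_E(q,y,y₊,y₋) := H¹_E(q,y) + 1_{q>−q̄}·H⁰_E(y,y₋) + 1_{q<q̄}·H⁰_E(y,y₊). Assume δ∞ ≥ C∞ + max( |(1/η)log(y/y₊)|, |(1/η)log(y/y₋)| ), with C∞ := c + log[ (1 + σγ/k)^{1/η + 1/γ} / (1 − σ²γη/((k+σγ)(k+ση)))^{1/η} ]. Then H_E(q,y,y₊,y₋) = (γη²σ²/(2(γ+η)))·q²·y − C₀·y·[ 1_{q>−q̄}·(y/y₋)^{k/(ση)}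 + 1_{q<q̄}·(y/y₊)^{k/(ση)} ], where C₀ := A·(ση/k)·(1+σγ/k)^{−k/(σγ)}·(1 − σ²γη/((k+σγ)(k+ση)))^{1+k/(ση)}. -/
/-!
`H¹_E` is the supremum of a concave quadratic, attained at `z = -γq/(γ+η)`.
For `H⁰_E`, on the range where `Δ(ζ)` is not clamped, `ζ + Δ(ζ)` is the constant
`m = (1/γ) log(1 + σγ/k)`, and in the variable `u = -y' e^{η(ζ-c)}` the integrand is a
multiple of `u^{k/(ση)} (B - u)`, maximal at `u = B k/(k + ση)`. On the two half-lines where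
`Δ` is clamped to `±δ∞` the integrand is a combination of `e^{ηζ}` and `e^{-γζ}` with
nonpositive coefficients, so it lies below its tangent at the kink; the lower bound on `δ∞`
makes that tangent point back towards the unclamped range, and keeps the unclamped maximiser
inside it.
-/

open Real Set

-- `u^p (B - u) ≤ (pB/(p+1))^p (B/(p+1))`, written in the variable `u = pB/(p+1) · e^s`.
theorem exp_mul_mul_add_one_sub_mul_exp_le_one {p : ℝ} (hp : 0 ≤ p) (s : ℝ) :
    exp (p * s) * (p + 1 - p * exp s) ≤ 1 := by
  have h₁ : exp (p * s) * (1 - p * s) ≤ 1 := by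
    calc exp (p * s) * (1 - p * s) ≤ exp (p * s) * exp (-(p * s)) := by
          gcongr; linarith [add_one_le_exp (-(p * s))]
      _ = 1 := by rw [← exp_add, add_neg_cancel, exp_zero]
  have h₂ : p * s ≤ p * (exp s - 1) := by gcongr; linarith [add_one_le_exp s]
  nlinarith [mul_le_mul_of_nonneg_left h₂ (exp_pos (p * s)).le]

theorem mul_exp_add_mul_exp_le {a b : ℝ} (ha : a ≤ 0) (hb : b ≤ 0) (α β s : ℝ) :
    a * exp (α * s) + b * exp (-β * s) ≤ a + b + s * (α * a - β * b) := by
  have h₁ : a * exp (α * s) ≤ a * (α * s + 1) :=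
    mul_le_mul_of_nonpos_left (add_one_le_exp _) ha
  have h₂ : b * exp (-β * s) ≤ b * (-β * s + 1) :=
    mul_le_mul_of_nonpos_left (add_one_le_exp _) hb
  linarith

theorem isGreatest_range_mul_add_sq {a b κ : ℝ} (hab : 0 < a + b) (hκ : κ ≤ 0) (q : ℝ) :
    IsGreatest (range fun z => κ * (a * (z + q) ^ 2 + b * z ^ 2))
      (κ * (a * b / (a + b) * q ^ 2)) := by
  have hsq (z : ℝ) : a * (z + q) ^ 2 + b * z ^ 2 =
      a * b / (a + b) * q ^ 2 + ((a + b) * z + a * q) ^ 2 / (a + b) := by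
    field_simp; ring
  refine ⟨⟨-(a * q) / (a + b), ?_⟩, ?_⟩
  · simp only [hsq]; field_simp; ring
  · rintro _ ⟨z, rfl⟩
    simp only [hsq]
    exact mul_le_mul_of_nonpos_left (le_add_of_nonneg_right (by positivity)) hκ

noncomputable section

-- `bestSpread` is `Δ`, `spreadBound` is `C∞` and `hamiltonianConstant` is `C₀`;
-- `gain … ζ d` is the integrand of `H⁰_E` with `Δ(ζ)` replaced by a free spread `d`.

def spreadShift (k σ γ : ℝ) : ℝ := 1 / γ * log (1 + σ * γ / k)

def bestSpread (k σ γ δ ζ : ℝ) : ℝ := max (-δ) (min δ (-ζ + spreadShift k σ γ))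

def gain (A k σ γ η c y y' ζ d : ℝ) : ℝ :=
  A * exp (-k * (d + c) / σ) *
    (y' * exp (η * (ζ - c)) - y * (1 + η / γ * (1 - exp (-γ * (ζ + d)))))

def riskCorrection (k σ γ η : ℝ) : ℝ :=
  1 - σ ^ 2 * γ * η / ((k + σ * γ) * (k + σ * η))

def spreadBound (k σ γ η c : ℝ) : ℝ :=
  c + log ((1 + σ * γ / k) ^ (1 / η + 1 / γ) / riskCorrection k σ γ η ^ (1 / η))

def hamiltonianConstant (A k σ γ η : ℝ) : ℝ :=
  A * (σ * η / k) * (1 + σ * γ / k) ^ (-(k / (σ * γ))) *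
    riskCorrection k σ γ η ^ (1 + k / (σ * η))

end

section

variable {A k σ γ η c y y' : ℝ}

theorem riskCorrection_pos (hk : 0 < k) (hσ : 0 < σ) (hγ : 0 < γ) (hη : 0 < η) :
    0 < riskCorrection k σ γ η := by
  rw [riskCorrection, sub_pos, div_lt_one (by positivity)]
  nlinarith [mul_pos hk hk, mul_pos (mul_pos hk hσ) hη, mul_pos (mul_pos hk hσ) hγ]

theorem riskCorrection_le_one (hk : 0 < k) (hσ : 0 < σ) (hγ : 0 < γ) (hη : 0 < η) :
    riskCorrection k σ γ η ≤ 1 := by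
  rw [riskCorrection, sub_le_self_iff]; positivity

theorem riskCorrection_mul_one_add (hk : 0 < k) (hσ : 0 < σ) (hγ : 0 < γ) (hη : 0 < η) :
    riskCorrection k σ γ η * (1 + σ * η / k) = 1 + η / γ * (1 - (1 + σ * γ / k)⁻¹) := by
  rw [riskCorrection]; field_simp; ring

theorem hamiltonianConstant_pos (hA : 0 < A) (hk : 0 < k) (hσ : 0 < σ) (hγ : 0 < γ)
    (hη : 0 < η) : 0 < hamiltonianConstant A k σ γ η :=
  mul_pos (mul_pos (mul_pos hA (by positivity)) (rpow_pos_of_pos (by positivity) _))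
    (rpow_pos_of_pos (riskCorrection_pos hk hσ hγ hη) _)

theorem mul_exp_eq_mul_exp_log_div_add (hy : y < 0) (hy' : y' < 0) (b : ℝ) :
    y * exp b = y' * exp (log (y / y') + b) := by
  rw [exp_add, exp_log (div_pos_of_neg_of_neg hy hy')]; field_simp [hy'.ne]

theorem gain_le_gain_of_mul_nonpos (hA : 0 < A) (hγ : 0 < γ) (hη : 0 < η) (hy : y < 0)
    (hy' : y' < 0) {ζ₀ ζ d : ℝ}
    (h : (ζ - ζ₀) * (y' * exp (η * (ζ₀ - c)) - y * exp (-γ * (ζ₀ + d))) ≤ 0) :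
    gain A k σ γ η c y y' ζ d ≤ gain A k σ γ η c y y' ζ₀ d := by
  refine mul_le_mul_of_nonneg_left ?_ (by positivity)
  have htangent := mul_exp_add_mul_exp_le (a := y' * exp (η * (ζ₀ - c)))
    (b := y * (η / γ) * exp (-γ * (ζ₀ + d)))
    (mul_nonpos_of_nonpos_of_nonneg hy'.le (exp_pos _).le)
    (mul_nonpos_of_nonpos_of_nonneg (mul_nonpos_of_nonpos_of_nonneg hy.le (div_pos hη hγ).le)
      (exp_pos _).le)
    η γ (ζ - ζ₀)
  have e₁ : exp (η * (ζ - c)) = exp (η * (ζ₀ - c)) * exp (η * (ζ - ζ₀)) := by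
    rw [← exp_add]; ring_nf
  have e₂ : exp (-γ * (ζ + d)) = exp (-γ * (ζ₀ + d)) * exp (-γ * (ζ - ζ₀)) := by
    rw [← exp_add]; ring_nf
  have hγη : γ * (η / γ) = η := by field_simp
  rw [e₁, e₂]
  linear_combination htangent + η * h - (ζ - ζ₀) * y * exp (-γ * (ζ₀ + d)) * hγη

-- On the unclamped branch `ζ + Δ(ζ) = m`, and `s` measures the distance to the maximiser.
theorem gain_spreadShift_eq (hk : 0 < k) (hσ : 0 < σ) (hγ : 0 < γ) (hη : 0 < η) (hy : y < 0)
    (hy' : y' < 0) {ζ s : ℝ}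
    (hζ : η * (ζ - c) = log (y / y') + log (riskCorrection k σ γ η) + s) :
    gain A k σ γ η c y y' ζ (-ζ + spreadShift k σ γ) =
      -hamiltonianConstant A k σ γ η * y * (y / y') ^ (k / (σ * η)) *
        (exp (k / (σ * η) * s) * (k / (σ * η) + 1 - k / (σ * η) * exp s)) := by
  have hL : 0 < 1 + σ * γ / k := by positivity
  have hD := riskCorrection_pos hk hσ hγ hη
  have hr : 0 < y / y' := div_pos_of_neg_of_neg hy hy'
  have e₁ : -k * (-ζ + spreadShift k σ γ + c) / σ =
      log (1 + σ * γ / k) * (-(k / (σ * γ))) +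
        (log (y / y') * (k / (σ * η)) + (log (riskCorrection k σ γ η) * (k / (σ * η)) +
          k / (σ * η) * s)) := by
    rw [spreadShift]; field_simp; linear_combination γ * hζ
  have e₂ : -γ * (ζ + (-ζ + spreadShift k σ γ)) = -log (1 + σ * γ / k) := by
    rw [spreadShift]; field_simp; ring
  rw [gain, e₁, e₂, hζ, exp_add, exp_add, exp_add, exp_add, exp_add, exp_neg, exp_log hL,
    exp_log hr, exp_log hD, ← rpow_def_of_pos hL, ← rpow_def_of_pos hr, ← rpow_def_of_pos hD,
    hamiltonianConstant, rpow_add hD, rpow_one, ← riskCorrection_mul_one_add hk hσ hγ hη]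
  field_simp [hy'.ne]
  ring

theorem gain_spreadShift_le (hA : 0 < A) (hk : 0 < k) (hσ : 0 < σ) (hγ : 0 < γ) (hη : 0 < η)
    (hy : y < 0) (hy' : y' < 0) (ζ : ℝ) :
    gain A k σ γ η c y y' ζ (-ζ + spreadShift k σ γ) ≤
      -hamiltonianConstant A k σ γ η * y * (y / y') ^ (k / (σ * η)) := by
  rw [gain_spreadShift_eq hk hσ hγ hη hy hy'
    (s := η * (ζ - c) - log (y / y') - log (riskCorrection k σ γ η)) (by ring)]
  refine mul_le_of_le_one_right ?_ (exp_mul_mul_add_one_sub_mul_exp_le_one (by positivity) _)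
  exact mul_nonneg (mul_nonneg_of_nonpos_of_nonpos
    (neg_nonpos.2 (hamiltonianConstant_pos hA hk hσ hγ hη).le) hy.le)
    (rpow_nonneg (div_pos_of_neg_of_neg hy hy').le _)

theorem gain_bestSpread_le (hA : 0 < A) (hk : 0 < k) (hσ : 0 < σ) (hγ : 0 < γ) (hη : 0 < η)
    (hy : y < 0) (hy' : y' < 0) {δ : ℝ} (hδ : 0 ≤ δ)
    (hright :
      y' * exp (η * (spreadShift k σ γ + δ - c)) ≤ y * exp (-γ * spreadShift k σ γ))
    (hleft : y * exp (-γ * spreadShift k σ γ) ≤ y' * exp (η * (spreadShift k σ γ - δ - c)))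
    (ζ : ℝ) :
    gain A k σ γ η c y y' ζ (bestSpread k σ γ δ ζ) ≤
      -hamiltonianConstant A k σ γ η * y * (y / y') ^ (k / (σ * η)) := by
  set m := spreadShift k σ γ
  rw [bestSpread]
  rcases le_total (-ζ + m) δ with hle | hle
  · rcases le_total (-δ) (-ζ + m) with hge | hge
    · rw [min_eq_right hle, max_eq_right hge]
      exact gain_spreadShift_le hA hk hσ hγ hη hy hy' ζ
    · rw [min_eq_right hle, max_eq_left hge]
      calc gain A k σ γ η c y y' ζ (-δ) ≤ gain A k σ γ η c y y' (m + δ) (-δ) :=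
            gain_le_gain_of_mul_nonpos hA hγ hη hy hy' (mul_nonpos_of_nonneg_of_nonpos
              (by linarith) (by rw [show m + δ + -δ = m by ring]; linarith))
        _ = gain A k σ γ η c y y' (m + δ) (-(m + δ) + m) := by
            rw [show -(m + δ) + m = -δ by ring]
        _ ≤ _ := gain_spreadShift_le hA hk hσ hγ hη hy hy' _
  · rw [min_eq_left hle, max_eq_right (by linarith)]
    calc gain A k σ γ η c y y' ζ δ ≤ gain A k σ γ η c y y' (m - δ) δ :=
          gain_le_gain_of_mul_nonpos hA hγ hη hy hy' (mul_nonpos_of_nonpos_of_nonneg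
            (by linarith) (by rw [show m - δ + δ = m by ring]; linarith))
      _ = gain A k σ γ η c y y' (m - δ) (-(m - δ) + m) := by
          rw [show -(m - δ) + m = δ by ring]
      _ ≤ _ := gain_spreadShift_le hA hk hσ hγ hη hy hy' _

theorem mul_le_of_spreadBound_add_le (hk : 0 < k) (hσ : 0 < σ) (hγ : 0 < γ) (hη : 0 < η)
    {r δ : ℝ} (hδ : spreadBound k σ γ η c + |1 / η * log r| ≤ δ) :
    η * c + (η / γ + 1) * log (1 + σ * γ / k) - log (riskCorrection k σ γ η) + |log r| ≤
      η * δ := by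
  have hL : 0 < 1 + σ * γ / k := by positivity
  have hD := riskCorrection_pos hk hσ hγ hη
  rw [spreadBound, log_div (rpow_pos_of_pos hL _).ne' (rpow_pos_of_pos hD _).ne', log_rpow hL,
    log_rpow hD, abs_mul, abs_of_pos (one_div_pos.2 hη)] at hδ
  calc _ = η * (c + ((1 / η + 1 / γ) * log (1 + σ * γ / k) -
        1 / η * log (riskCorrection k σ γ η)) + 1 / η * |log r|) := by field_simp; ring
    _ ≤ η * δ := by gcongr

theorem isGreatest_gain_bestSpread (hA : 0 < A) (hk : 0 < k) (hσ : 0 < σ) (hγ : 0 < γ)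
    (hη : 0 < η) (hc : 0 < c) (hy : y < 0) (hy' : y' < 0) {δ : ℝ}
    (hδ : spreadBound k σ γ η c + |1 / η * log (y / y')| ≤ δ) :
    IsGreatest (range fun ζ => gain A k σ γ η c y y' ζ (bestSpread k σ γ δ ζ))
      (-hamiltonianConstant A k σ γ η * y * (y / y') ^ (k / (σ * η))) := by
  have hbound := mul_le_of_spreadBound_add_le hk hσ hγ hη hδ
  set m := spreadShift k σ γ with hm
  have hlL : 0 ≤ log (1 + σ * γ / k) :=
    log_nonneg (by linarith [show 0 < σ * γ / k by positivity])
  have hlD : log (riskCorrection k σ γ η) ≤ 0 :=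
    log_nonpos (riskCorrection_pos hk hσ hγ hη).le (riskCorrection_le_one hk hσ hγ hη)
  have hγm : γ * m = log (1 + σ * γ / k) := by rw [hm, spreadShift]; field_simp
  have hηm : η * m = η / γ * log (1 + σ * γ / k) := by rw [hm, spreadShift]; ring
  have hηc := mul_pos hη hc
  have hηγ : 0 ≤ η / γ * log (1 + σ * γ / k) := by positivity
  have habs := abs_nonneg (log (y / y'))
  have hle_abs := le_abs_self (log (y / y'))
  have hneg_abs := neg_abs_le (log (y / y'))
  refine ⟨⟨c + (log (y / y') + log (riskCorrection k σ γ η)) / η, ?_⟩, ?_⟩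
  · set ζ := c + (log (y / y') + log (riskCorrection k σ γ η)) / η with hζ
    have hηζ : η * (-ζ + m) = η / γ * log (1 + σ * γ / k) - η * c - log (y / y') -
        log (riskCorrection k σ γ η) := by
      rw [mul_add, hηm, hζ]; field_simp; ring
    have hinterior : bestSpread k σ γ δ ζ = -ζ + m := by
      rw [bestSpread, min_eq_right, max_eq_right]
      · exact le_of_mul_le_mul_left (by linarith) hη
      · exact le_of_mul_le_mul_left (by linarith) hη
    dsimp only
    rw [hinterior,
      gain_spreadShift_eq hk hσ hγ hη hy hy' (s := 0) (by rw [hζ]; field_simp; ring)]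
    simp
  · rintro _ ⟨ζ, rfl⟩
    refine gain_bestSpread_le hA hk hσ hγ hη hy hy'
      (le_of_mul_le_mul_left (by linarith : η * 0 ≤ η * δ) hη) ?_ ?_ ζ
    · rw [mul_exp_eq_mul_exp_log_div_add hy hy']
      exact mul_le_mul_of_nonpos_left (exp_le_exp.2 (by linarith)) hy'.le
    · rw [mul_exp_eq_mul_exp_log_div_add hy hy']
      exact mul_le_mul_of_nonpos_left (exp_le_exp.2 (by linarith)) hy'.le

end

theorem statement4_general (A k σ γ η c δinf : ℝ) (qbar q : ℤ) (y yp ym : ℝ)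
    (hA : 0 < A) (hk : 0 < k) (hσ : 0 < σ) (hγ : 0 < γ) (hη : 0 < η) (hc : 0 < c)
    (hy : y < 0) (hyp : yp < 0) (hym : ym < 0)
    (hδinf : c + Real.log ((1 + σ * γ / k) ^ (1 / η + 1 / γ) /
          (1 - σ ^ 2 * γ * η / ((k + σ * γ) * (k + σ * η))) ^ (1 / η))
        + max |(1 / η) * Real.log (y / yp)| |(1 / η) * Real.log (y / ym)| ≤ δinf) :
    letI Δ : ℝ → ℝ := fun z =>
      max (-δinf) (min δinf (-z + (1 / γ) * Real.log (1 + σ * γ / k)))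
    letI H1 : ℝ :=
      sSup (Set.range fun z : ℝ =>
        (η * σ ^ 2 / 2) * y * (γ * (z + (q : ℝ)) ^ 2 + η * z ^ 2))
    letI H0 : ℝ → ℝ → ℝ := fun yy y' =>
      sSup (Set.range fun ζ : ℝ =>
        A * Real.exp (-k * (Δ ζ + c) / σ) *
          (y' * Real.exp (η * (ζ - c)) -
            yy * (1 + (η / γ) * (1 - Real.exp (-γ * (ζ + Δ ζ))))))
    letI C₀ : ℝ := A * (σ * η / k) * (1 + σ * γ / k) ^ (-(k / (σ * γ))) *
      (1 - σ ^ 2 * γ * η / ((k + σ * γ) * (k + σ * η))) ^ (1 + k / (σ * η))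
    H1 + (if -qbar < q then H0 y ym else 0) + (if q < qbar then H0 y yp else 0)
      = (γ * η ^ 2 * σ ^ 2 / (2 * (γ + η))) * (q : ℝ) ^ 2 * y
        - C₀ * y * ((if -qbar < q then (y / ym) ^ (k / (σ * η)) else 0)
            + (if q < qbar then (y / yp) ^ (k / (σ * η)) else 0)) := by
  have hH1 := (isGreatest_range_mul_add_sq (κ := η * σ ^ 2 / 2 * y) (add_pos hγ hη)
    (mul_nonpos_of_nonneg_of_nonpos (by positivity) hy.le) (q : ℝ)).csSup_eq
  have hH0p := (isGreatest_gain_bestSpread hA hk hσ hγ hη hc hy hyp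
    ((add_le_add le_rfl (le_max_left _ _)).trans hδinf)).csSup_eq
  have hH0m := (isGreatest_gain_bestSpread hA hk hσ hγ hη hc hy hym
    ((add_le_add le_rfl (le_max_right _ _)).trans hδinf)).csSup_eq
  simp only [gain, bestSpread, spreadShift, hamiltonianConstant, riskCorrection] at hH0p hH0m
  beta_reduce
  rw [hH1, hH0p, hH0m]
  split_ifs <;> field_simp <;> ring

/-- explicit form of the exchange's Hamiltonian
`H_E(q,y,y₊,y₋) = H¹_E(q,y) + 1_{q>−q̄}·H⁰_E(y,y₋) + 1_{q<q̄}·H⁰_E(y,y₊)`, namely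
`(γη²σ²/(2(γ+η)))·q²·y − C₀·y·[1_{q>−q̄}·(y/y₋)^{k/(ση)} + 1_{q<q̄}·(y/y₊)^{k/(ση)}]`. -/
theorem statement4 (A k σ γ η c δinf : ℝ) (qbar q : ℤ) (y yp ym : ℝ)
    (hA : 0 < A) (hk : 0 < k) (hσ : 0 < σ) (hγ : 0 < γ) (hη : 0 < η) (hc : 0 < c)
    (hqbar : 1 ≤ qbar) (hq : |q| ≤ qbar)
    (hy : y < 0) (hyp : yp < 0) (hym : ym < 0)
    (hδinf : c + Real.log ((1 + σ * γ / k) ^ (1 / η + 1 / γ) /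
          (1 - σ ^ 2 * γ * η / ((k + σ * γ) * (k + σ * η))) ^ (1 / η))
        + max |(1 / η) * Real.log (y / yp)| |(1 / η) * Real.log (y / ym)| ≤ δinf) :
    letI Δ : ℝ → ℝ := fun z =>
      max (-δinf) (min δinf (-z + (1 / γ) * Real.log (1 + σ * γ / k)))
    letI H1 : ℝ :=
      sSup (Set.range fun z : ℝ =>
        (η * σ ^ 2 / 2) * y * (γ * (z + (q : ℝ)) ^ 2 + η * z ^ 2))
    letI H0 : ℝ → ℝ → ℝ := fun yy y' =>
      sSup (Set.range fun ζ : ℝ =>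
        A * Real.exp (-k * (Δ ζ + c) / σ) *
          (y' * Real.exp (η * (ζ - c)) -
            yy * (1 + (η / γ) * (1 - Real.exp (-γ * (ζ + Δ ζ))))))
    letI C₀ : ℝ := A * (σ * η / k) * (1 + σ * γ / k) ^ (-(k / (σ * γ))) *
      (1 - σ ^ 2 * γ * η / ((k + σ * γ) * (k + σ * η))) ^ (1 + k / (σ * η))
    H1 + (if -qbar < q then H0 y ym else 0) + (if q < qbar then H0 y yp else 0)
      = (γ * η ^ 2 * σ ^ 2 / (2 * (γ + η))) * (q : ℝ) ^ 2 * y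
        - C₀ * y * ((if -qbar < q then (y / ym) ^ (k / (σ * η)) else 0)
            + (if q < qbar then (y / yp) ^ (k / (σ * η)) else 0)) :=
  statement4_general A k σ γ η c δinf qbar q y yp ym hA hk hσ hγ hη hc hy hyp hym hδinf
end

section
/- Fix A, k, σ, γ, η, c > 0, an integer q̄ ≥ 1 and T > 0. Set C₁ := kγησ/(2(γ+η)), C₀ := A·(ση/k)·(1+σγ/k)^{−k/(σγ)}·(1 − σ²γη/((k+σγ)(k+ση)))^{1+k/(ση)} and C'₁ := kC₀/(ση). Let v : [0,T] × {−q̄,…,q̄} → ℝ take strictly negative values, be differentiable in t for each q, and define u(t,q) := (−v(t,q))^{−k/(ση)}. Then v satisfies ∂ₜv(t,q) + (γη²σ²/(2(γ+η)))·q²·v(t,q) − C₀·v(t,q)·[ 1_{q>−q̄}·(v(t,q)/v(t,q−1))^{k/(ση)} + 1_{q<q̄}·(v(t,q)/v(t,q+1))^{k/(ση)} ] = 0 for all t ∈ [0,T) and |q| ≤ q̄, with v(T,q) = −1, if and only if u satisfies the linear system ∂ₜu(t,q) = C₁·q²·u(t,q) − C'₁·( u(t,q+1)·1_{q<q̄}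 + u(t,q−1)·1_{q>−q̄} ) for all t ∈ [0,T) and |q| ≤ q̄, with u(T,q) = 1. -/
/-!
With `w = -v > 0` and `α = k/(ση)`, the chain rule gives `∂ₜu = α w^{-α-1} ∂ₜv`, so multiplying
the HJB equation by the nonzero factor `α w^{-α-1}` turns each of its terms into a term of the
linear system: `w^{-α-1} v = -u`, and the nonlinear neighbour terms become linear because
`w(q)^{-α} (v(q)/v(q'))^α = w(q')^{-α}`. The constants match since `C₁ = α γη²σ²/(2(γ+η))` and
`C'₁ = α C₀`.
-/

open Real

lemma HasDerivAt.neg_rpow_const {f : ℝ → ℝ} {f' t : ℝ} (hf : HasDerivAt f f' t) (hft : f t < 0)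
    (p : ℝ) : HasDerivAt (fun s => (-f s) ^ p) (-p * (-f t) ^ (p - 1) * f') t := by
  have h := hf.neg.rpow_const (p := p) (Or.inl (neg_pos.2 hft).ne')
  simp only [Pi.neg_apply] at h
  convert h using 1
  ring

lemma neg_rpow_neg_mul_div_rpow {x y : ℝ} (hx : x < 0) (hy : y < 0) (α : ℝ) :
    (-x) ^ (-α) * (x / y) ^ α = (-y) ^ (-α) := by
  have hx' : 0 < -x := neg_pos.2 hx
  have hy' : 0 < -y := neg_pos.2 hy
  rw [← neg_div_neg_eq, div_rpow hx'.le hy'.le, rpow_neg hx'.le, rpow_neg hy'.le]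
  field_simp [(rpow_pos_of_pos hx' α).ne', (rpow_pos_of_pos hy' α).ne']

lemma neg_rpow_neg_eq_one_iff {x α : ℝ} (hx : x < 0) (hα : α ≠ 0) :
    (-x) ^ (-α) = 1 ↔ x = -1 := by
  conv_lhs => rw [← one_rpow (-α)]
  rw [rpow_left_inj (neg_pos.2 hx).le zero_le_one (neg_ne_zero.2 hα), neg_eq_iff_eq_neg]

lemma add_mul_sub_mul_eq_zero_iff {α x P B C S : ℝ} (hα : α ≠ 0) (hx : x < 0) :
    P + B * x - C * x * S = 0 ↔
      α * (-x) ^ (-α - 1) * P = α * B * (-x) ^ (-α) - α * C * ((-x) ^ (-α) * S) := by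
  have hx' : 0 < -x := neg_pos.2 hx
  have hfactor : α * (-x) ^ (-α - 1) ≠ 0 := mul_ne_zero hα (rpow_pos_of_pos hx' _).ne'
  have hpow : (-x) ^ (-α) = (-x) ^ (-α - 1) * -x := by
    rw [rpow_sub_one hx'.ne', div_mul_cancel₀ _ hx'.ne']
  rw [← mul_right_inj' hfactor, mul_zero, hpow]
  constructor <;> intro h <;> linear_combination h

lemma hjb_iff_linear_at {v : ℝ → ℤ → ℝ} (hvneg : ∀ t q, v t q < 0) {α : ℝ} (hα : α ≠ 0)
    (B C : ℝ) (qbar q : ℤ) {t : ℝ} (hdiff : DifferentiableAt ℝ (fun s => v s q) t) :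
    deriv (fun s => v s q) t + B * (q : ℝ) ^ 2 * v t q
        - C * v t q * ((if -qbar < q then (v t q / v t (q - 1)) ^ α else 0)
          + (if q < qbar then (v t q / v t (q + 1)) ^ α else 0)) = 0 ↔
      deriv (fun s => (-v s q) ^ (-α)) t
        = α * B * (q : ℝ) ^ 2 * (-v t q) ^ (-α)
          - α * C * ((if q < qbar then (-v t (q + 1)) ^ (-α) else 0)
            + (if -qbar < q then (-v t (q - 1)) ^ (-α) else 0)) := by
  have hneighbours : (-v t q) ^ (-α) * ((if -qbar < q then (v t q / v t (q - 1)) ^ α else 0)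
        + (if q < qbar then (v t q / v t (q + 1)) ^ α else 0))
      = (if q < qbar then (-v t (q + 1)) ^ (-α) else 0)
        + (if -qbar < q then (-v t (q - 1)) ^ (-α) else 0) := by
    rw [mul_add, mul_ite, mul_ite, mul_zero, add_comm,
      neg_rpow_neg_mul_div_rpow (hvneg t q) (hvneg t (q - 1)),
      neg_rpow_neg_mul_div_rpow (hvneg t q) (hvneg t (q + 1))]
  rw [(hdiff.hasDerivAt.neg_rpow_const (hvneg t q) (-α)).deriv, ← hneighbours,
    add_mul_sub_mul_eq_zero_iff hα (hvneg t q)]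
  constructor <;> intro h <;> linear_combination h

theorem statement5_general (A k σ γ η T : ℝ) (qbar : ℤ)
    (hk : 0 < k) (hσ : 0 < σ) (hη : 0 < η)
    (v : ℝ → ℤ → ℝ)
    (hvneg : ∀ t : ℝ, ∀ q : ℤ, v t q < 0)
    (hvdiff : ∀ q : ℤ, ∀ t : ℝ, DifferentiableAt ℝ (fun s => v s q) t) :
    letI C₀ : ℝ := A * (σ * η / k) * (1 + σ * γ / k) ^ (-(k / (σ * γ))) *
      (1 - σ ^ 2 * γ * η / ((k + σ * γ) * (k + σ * η))) ^ (1 + k / (σ * η))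
    letI C₁ : ℝ := k * γ * η * σ / (2 * (γ + η))
    letI C₁' : ℝ := k * C₀ / (σ * η)
    letI u : ℝ → ℤ → ℝ := fun t q => (-(v t q)) ^ (-(k / (σ * η)))
    ((∀ t ∈ Set.Ico (0 : ℝ) T, ∀ q : ℤ, |q| ≤ qbar →
        deriv (fun s => v s q) t
          + (γ * η ^ 2 * σ ^ 2 / (2 * (γ + η))) * (q : ℝ) ^ 2 * v t q
          - C₀ * v t q *
            ((if -qbar < q then (v t q / v t (q - 1)) ^ (k / (σ * η)) else 0)
              + (if q < qbar then (v t q / v t (q + 1)) ^ (k / (σ * η)) else 0)) = 0)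
      ∧ (∀ q : ℤ, |q| ≤ qbar → v T q = -1))
    ↔
    ((∀ t ∈ Set.Ico (0 : ℝ) T, ∀ q : ℤ, |q| ≤ qbar →
        deriv (fun s => u s q) t
          = C₁ * (q : ℝ) ^ 2 * u t q
            - C₁' * ((if q < qbar then u t (q + 1) else 0)
              + (if -qbar < q then u t (q - 1) else 0)))
      ∧ (∀ q : ℤ, |q| ≤ qbar → u T q = 1)) := by
  have hα : k / (σ * η) ≠ 0 := by positivity
  have hC₁ : k * γ * η * σ / (2 * (γ + η))
      = k / (σ * η) * (γ * η ^ 2 * σ ^ 2 / (2 * (γ + η))) := by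
    rw [← mul_div_assoc]
    congr 1
    field_simp
  have hC₁' (C₀ : ℝ) : k * C₀ / (σ * η) = k / (σ * η) * C₀ := by ring
  refine and_congr (forall₂_congr fun t _ => forall₂_congr fun q _ => ?_)
    (forall₂_congr fun q _ => (neg_rpow_neg_eq_one_iff (hvneg T q) hα).symm)
  rw [hC₁, hC₁']
  exact hjb_iff_linear_at hvneg hα _ _ qbar q (hvdiff q t)

/-- linearization of the exchange's HJB system: `v` (strictly negative,
differentiable in time) solves the nonlinear system iff `u = (−v)^{−k/(ση)}` solves the
linear system `∂ₜu = C₁q²u − C'₁(u(q+1)1_{q<q̄} + u(q−1)1_{q>−q̄})` with `u(T,·) = 1`. -/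
theorem statement5 (A k σ γ η c T : ℝ) (qbar : ℤ)
    (hA : 0 < A) (hk : 0 < k) (hσ : 0 < σ) (hγ : 0 < γ) (hη : 0 < η) (hc : 0 < c)
    (hqbar : 1 ≤ qbar) (hT : 0 < T)
    (v : ℝ → ℤ → ℝ)
    (hvneg : ∀ t : ℝ, ∀ q : ℤ, v t q < 0)
    (hvdiff : ∀ q : ℤ, ∀ t : ℝ, DifferentiableAt ℝ (fun s => v s q) t) :
    letI C₀ : ℝ := A * (σ * η / k) * (1 + σ * γ / k) ^ (-(k / (σ * γ))) *
      (1 - σ ^ 2 * γ * η / ((k + σ * γ) * (k + σ * η))) ^ (1 + k / (σ * η))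
    letI C₁ : ℝ := k * γ * η * σ / (2 * (γ + η))
    letI C₁' : ℝ := k * C₀ / (σ * η)
    letI u : ℝ → ℤ → ℝ := fun t q => (-(v t q)) ^ (-(k / (σ * η)))
    ((∀ t ∈ Set.Ico (0 : ℝ) T, ∀ q : ℤ, |q| ≤ qbar →
        deriv (fun s => v s q) t
          + (γ * η ^ 2 * σ ^ 2 / (2 * (γ + η))) * (q : ℝ) ^ 2 * v t q
          - C₀ * v t q *
            ((if -qbar < q then (v t q / v t (q - 1)) ^ (k / (σ * η)) else 0)
              + (if q < qbar then (v t q / v t (q + 1)) ^ (k / (σ * η)) else 0)) = 0)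
      ∧ (∀ q : ℤ, |q| ≤ qbar → v T q = -1))
    ↔
    ((∀ t ∈ Set.Ico (0 : ℝ) T, ∀ q : ℤ, |q| ≤ qbar →
        deriv (fun s => u s q) t
          = C₁ * (q : ℝ) ^ 2 * u t q
            - C₁' * ((if q < qbar then u t (q + 1) else 0)
              + (if -qbar < q then u t (q - 1) else 0)))
      ∧ (∀ q : ℤ, |q| ≤ qbar → u T q = 1)) :=
  statement5_general A k σ γ η T qbar hk hσ hη v hvneg hvdiff
end

section
/- (Bounds of Proposition 4.1.) Fix constants C₁, C'₁ > 0, an integer q̄ ≥ 1 and T > 0. Let B be the (2q̄+1)×(2q̄+1) real matrix, indexed by q ∈ {−q̄,…,q̄}, with diagonal entries B_{q,q} = −C₁ q², entries B_{q,q+1} = B_{q+1,q} = C'₁, and all other entries zero, and define u(t,q) := (e^{(T−t)B}·𝟏)_q for t ∈ [0,T] and |q| ≤ q̄, where 𝟏 is the all-ones vector. Then for all t ∈ [0,T] and all q with |q| ≤ q̄: e^{−C₁ q̄² T} ≤ u(t,q) ≤ e^{2C'₁ T}. -/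
/-!
Write `s • B = N - (s λ) • 1` with `λ = C₁ q̄²` the largest decay rate on the diagonal. Since the
off-diagonal entries of `B` are nonnegative, `N` is entrywise nonnegative, with row sums at most
`s (λ + 2 C₁')`. Then `e^{sB} 𝟏 = e^{-sλ} e^{N} 𝟏`, and termwise in the exponential series
`1 ≤ (e^{N} 𝟏)_q ≤ e^{s (λ + 2 C₁')}`: every term `N^k 𝟏 / k!` is nonnegative, the zeroth one is
`𝟏`, and `N^k 𝟏 ≤ (s (λ + 2 C₁'))^k`. Finally `0 ≤ s = T - t ≤ T`.
-/

open Matrix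

theorem Fin.card_filter_adjacent_le_two {n : ℕ} (i : Fin n) :
    Finset.card {j : Fin n | (i : ℕ) + 1 = j ∨ (j : ℕ) + 1 = i} ≤ 2 :=
  calc Finset.card {j : Fin n | (i : ℕ) + 1 = j ∨ (j : ℕ) + 1 = i}
      ≤ Finset.card ({(i : ℕ) + 1, (i : ℕ) - 1} : Finset ℕ) :=
        Finset.card_le_card_of_injOn Fin.val (fun j hj => by simp at hj ⊢; omega)
          Fin.val_injective.injOn
    _ ≤ 2 := Finset.card_le_two

namespace Matrix

section SymmTridiagonal

def symmTridiagonal {n : ℕ} (d : Fin n → ℝ) (c : ℝ) : Matrix (Fin n) (Fin n) ℝ :=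
  fun i j => if i = j then d i else if (i : ℕ) + 1 = j ∨ (j : ℕ) + 1 = i then c else 0

variable {n : ℕ} {d : Fin n → ℝ} {c : ℝ}

@[simp]
theorem symmTridiagonal_apply_self (i : Fin n) : symmTridiagonal d c i i = d i := if_pos rfl

theorem symmTridiagonal_apply_nonneg_of_ne (hc : 0 ≤ c) {i j : Fin n} (hij : i ≠ j) :
    0 ≤ symmTridiagonal d c i j := by
  unfold symmTridiagonal
  split_ifs <;> simp_all

theorem sum_symmTridiagonal_apply_le (hc : 0 ≤ c) (i : Fin n) :
    ∑ j, symmTridiagonal d c i j ≤ d i + 2 * c := by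
  have hsplit : ∀ j, symmTridiagonal d c i j =
      (if i = j then d i else 0) + if (i : ℕ) + 1 = j ∨ (j : ℕ) + 1 = i then c else 0 := by
    intro j
    unfold symmTridiagonal
    split_ifs <;> simp_all
  simp only [hsplit, Finset.sum_add_distrib, Finset.sum_ite_eq, Finset.mem_univ, if_true,
    ← Finset.sum_filter, Finset.sum_const, nsmul_eq_mul]
  gcongr
  exact_mod_cast Fin.card_filter_adjacent_le_two i

end SymmTridiagonal

variable {n : Type*} [Fintype n] [DecidableEq n]

theorem pow_mulVec_one_mem_Icc_of_nonneg {N : Matrix n n ℝ} {c : ℝ} (hN : ∀ i j, 0 ≤ N i j)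
    (hrow : ∀ i, ∑ j, N i j ≤ c) (k : ℕ) (i : n) : (N ^ k *ᵥ 1) i ∈ Set.Icc 0 (c ^ k) := by
  induction k generalizing i with
  | zero => simp
  | succ k ih =>
    have hc : 0 ≤ c := (Finset.sum_nonneg fun j _ => hN i j).trans (hrow i)
    rw [pow_succ' N, ← mulVec_mulVec]
    refine ⟨Finset.sum_nonneg fun j _ => mul_nonneg (hN i j) (ih j).1, ?_⟩
    calc ∑ j, N i j * (N ^ k *ᵥ 1) j ≤ ∑ j, N i j * c ^ k :=
          Finset.sum_le_sum fun j _ => mul_le_mul_of_nonneg_left (ih j).2 (hN i j)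
      _ = (∑ j, N i j) * c ^ k := (Finset.sum_mul ..).symm
      _ ≤ c ^ (k + 1) := by rw [pow_succ']; gcongr; exact hrow i

section

-- Any matrix norm would do: it is only needed to sum the exponential series.
attribute [local instance] Matrix.linftyOpNormedRing Matrix.linftyOpNormedAlgebra

theorem exp_mulVec_one_mem_Icc_of_nonneg {N : Matrix n n ℝ} {c : ℝ} (hN : ∀ i j, 0 ≤ N i j)
    (hrow : ∀ i, ∑ j, N i j ≤ c) (i : n) :
    (NormedSpace.exp N *ᵥ 1) i ∈ Set.Icc 1 (Real.exp c) := by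
  let row : Matrix n n ℝ →+ ℝ := (Pi.evalAddMonoidHom _ i).comp (mulVec.addMonoidHomLeft 1)
  have hrow_cont : Continuous row :=
    (continuous_apply i).comp (continuous_id.matrix_mulVec continuous_const)
  have hseries : HasSum (fun k : ℕ => (k.factorial : ℝ)⁻¹ * (N ^ k *ᵥ 1) i)
      ((NormedSpace.exp N *ᵥ 1) i) := by
    convert (NormedSpace.exp_series_hasSum_exp' (𝕂 := ℝ) N).map row hrow_cont using 1
    · ext k
      simp [row, smul_mulVec]
    · rfl
  have hterm k := pow_mulVec_one_mem_Icc_of_nonneg hN hrow k i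
  constructor
  · simpa using le_hasSum hseries 0 fun k _ => mul_nonneg (by positivity) (hterm k).1
  · refine hasSum_le (fun k => ?_) hseries
      (Real.exp_eq_exp_ℝ ▸ NormedSpace.exp_series_hasSum_exp' (𝕂 := ℝ) c)
    simpa [smul_eq_mul] using mul_le_mul_of_nonneg_left (hterm k).2 (by positivity)

end

theorem exp_add_smul_one (M : Matrix n n ℝ) (a : ℝ) :
    NormedSpace.exp (M + a • 1) = Real.exp a • NormedSpace.exp M := by
  rw [exp_add_of_commute _ _ ((Commute.one_right M).smul_right a), smul_one_eq_diagonal,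
    exp_diagonal, Pi.exp_def, ← Real.exp_eq_exp_ℝ, ← smul_one_eq_diagonal, mul_smul_one]

theorem exp_mulVec_one_mem_Icc_of_offDiag_nonneg {M : Matrix n n ℝ} {a r : ℝ}
    (hoff : ∀ i j, i ≠ j → 0 ≤ M i j) (hdiag : ∀ i, -a ≤ M i i) (hrow : ∀ i, ∑ j, M i j ≤ r)
    (i : n) : (NormedSpace.exp M *ᵥ 1) i ∈ Set.Icc (Real.exp (-a)) (Real.exp r) := by
  let N := M + a • 1
  have hN_nonneg : ∀ i j, 0 ≤ N i j := by
    intro i j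
    by_cases hij : i = j
    · subst hij
      simp only [N, add_apply, smul_apply, one_apply_eq, smul_eq_mul, mul_one]
      linarith [hdiag i]
    · simpa [N, one_apply_ne hij] using hoff i j hij
  have hN_row : ∀ i, ∑ j, N i j ≤ r + a := by
    intro i
    simpa [N, Finset.sum_add_distrib, one_apply] using hrow i
  have hM : M = N + (-a) • 1 := by simp [N]
  obtain ⟨hlo, hhi⟩ := exp_mulVec_one_mem_Icc_of_nonneg hN_nonneg hN_row i
  rw [hM, exp_add_smul_one, smul_mulVec, Pi.smul_apply, smul_eq_mul]
  constructor
  · exact le_mul_of_one_le_right (Real.exp_pos _).le hlo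
  · calc _ ≤ Real.exp (-a) * Real.exp (r + a) := by gcongr
      _ = Real.exp r := by rw [← Real.exp_add]; ring_nf

theorem exp_smul_mulVec_one_mem_Icc_of_offDiag_nonneg {M : Matrix n n ℝ} {s a r : ℝ}
    (hs : 0 ≤ s) (hoff : ∀ i j, i ≠ j → 0 ≤ M i j) (hdiag : ∀ i, -a ≤ M i i)
    (hrow : ∀ i, ∑ j, M i j ≤ r) (i : n) :
    (NormedSpace.exp (s • M) *ᵥ 1) i ∈ Set.Icc (Real.exp (-(s * a))) (Real.exp (s * r)) :=
  exp_mulVec_one_mem_Icc_of_offDiag_nonneg (fun i j hij => mul_nonneg hs (hoff i j hij))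
    (fun i => by simpa using mul_le_mul_of_nonneg_left (hdiag i) hs)
    (fun i => by simpa [← Finset.mul_sum] using mul_le_mul_of_nonneg_left (hrow i) hs) i

end Matrix

theorem statement7_general (C₁ C₁' T : ℝ) (hC₁ : 0 < C₁) (hC₁' : 0 < C₁')
    (qbar : ℕ) :
    letI B : Matrix (Fin (2 * qbar + 1)) (Fin (2 * qbar + 1)) ℝ := fun i j =>
      if i = j then -C₁ * (((i : ℕ) : ℝ) - (qbar : ℝ)) ^ 2
      else if (i : ℕ) + 1 = (j : ℕ) ∨ (j : ℕ) + 1 = (i : ℕ) then C₁' else 0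
    ∀ t ∈ Set.Icc (0 : ℝ) T, ∀ i : Fin (2 * qbar + 1),
      Real.exp (-C₁ * (qbar : ℝ) ^ 2 * T)
          ≤ ((NormedSpace.exp ((T - t) • B)) *ᵥ (fun _ => 1)) i ∧
        ((NormedSpace.exp ((T - t) • B)) *ᵥ (fun _ => 1)) i
          ≤ Real.exp (2 * C₁' * T) := by
  intro t ⟨ht0, htT⟩ i
  let d : Fin (2 * qbar + 1) → ℝ := fun i => -C₁ * (((i : ℕ) : ℝ) - qbar) ^ 2
  have hd (i : Fin (2 * qbar + 1)) : -(C₁ * qbar ^ 2) ≤ d i ∧ d i ≤ 0 := by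
    have hi : ((i : ℕ) : ℝ) ≤ 2 * qbar := by exact_mod_cast Nat.lt_succ_iff.1 i.isLt
    simp only [d]
    constructor <;>
      nlinarith [mul_nonneg hC₁.le (mul_nonneg (Nat.cast_nonneg (i : ℕ)) (sub_nonneg.2 hi))]
  obtain ⟨hlo, hhi⟩ := exp_smul_mulVec_one_mem_Icc_of_offDiag_nonneg
    (M := symmTridiagonal d C₁') (a := C₁ * qbar ^ 2) (r := 2 * C₁') (sub_nonneg.2 htT)
    (fun _ _ => symmTridiagonal_apply_nonneg_of_ne hC₁'.le)
    (fun i => by simpa using (hd i).1)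
    (fun i => (sum_symmTridiagonal_apply_le hC₁'.le i).trans (by linarith [(hd i).2])) i
  have hrate : 0 ≤ C₁ * qbar ^ 2 := by positivity
  exact ⟨(Real.exp_le_exp.2 (by nlinarith)).trans hlo,
    hhi.trans (Real.exp_le_exp.2 (by nlinarith))⟩

/-- bounds of Proposition 4.1: with `B` the tridiagonal matrix with diagonal
`−C₁q²` (for `q ∈ {−q̄,…,q̄}`) and off-diagonal entries `C'₁`, the entries of
`u(t) = e^{(T−t)B}·𝟏` satisfy `e^{−C₁q̄²T} ≤ u(t,q) ≤ e^{2C'₁T}` on `[0,T]`. -/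
theorem statement7 (C₁ C₁' T : ℝ) (hC₁ : 0 < C₁) (hC₁' : 0 < C₁') (hT : 0 < T)
    (qbar : ℕ) (hqbar : 1 ≤ qbar) :
    letI B : Matrix (Fin (2 * qbar + 1)) (Fin (2 * qbar + 1)) ℝ := fun i j =>
      if i = j then -C₁ * (((i : ℕ) : ℝ) - (qbar : ℝ)) ^ 2
      else if (i : ℕ) + 1 = (j : ℕ) ∨ (j : ℕ) + 1 = (i : ℕ) then C₁' else 0
    ∀ t ∈ Set.Icc (0 : ℝ) T, ∀ i : Fin (2 * qbar + 1),
      Real.exp (-C₁ * (qbar : ℝ) ^ 2 * T)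
          ≤ ((NormedSpace.exp ((T - t) • B)) *ᵥ (fun _ => 1)) i ∧
        ((NormedSpace.exp ((T - t) • B)) *ᵥ (fun _ => 1)) i
          ≤ Real.exp (2 * C₁' * T) :=
  statement7_general C₁ C₁' T hC₁ hC₁' qbar
end

section
/- Fix σ, γ, η > 0, an integer N ≥ 1 and q ∈ ℝ, and set z̃ := −γq/(η + Nγ). Then sup over z ∈ ℝ of [ −(σ²γ/2)·( (z + (N−1)z̃ + q)² − ((N−1)/N)·(Nz̃ + q)² ) − (ησ²/2)·z² ] equals −γησ²q²/(2N(Nγ+η)), and the supremum is attained at the unique point z = z̃. -/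
/-- the optimized diffusion part of the Hamiltonian in the `N`-exchange
symmetric Nash equilibrium: with `z̃ = −γq/(η+Nγ)`,
`sup_z [−(σ²γ/2)((z+(N−1)z̃+q)² − ((N−1)/N)(Nz̃+q)²) − (ησ²/2)z²] = −γησ²q²/(2N(Nγ+η))`,
attained at the unique point `z = z̃`. -/
theorem statement14 (σ γ η q : ℝ) (N : ℕ)
    (hσ : 0 < σ) (hγ : 0 < γ) (hη : 0 < η) (hN : 1 ≤ N) :
    letI zt : ℝ := -γ * q / (η + (N : ℝ) * γ)
    letI f : ℝ → ℝ := fun z =>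
      -(σ ^ 2 * γ / 2) * ((z + ((N : ℝ) - 1) * zt + q) ^ 2
          - (((N : ℝ) - 1) / (N : ℝ)) * ((N : ℝ) * zt + q) ^ 2)
        - (η * σ ^ 2 / 2) * z ^ 2
    IsGreatest (Set.range f)
        (-(γ * η * σ ^ 2 * q ^ 2) / (2 * (N : ℝ) * ((N : ℝ) * γ + η))) ∧
      f zt = -(γ * η * σ ^ 2 * q ^ 2) / (2 * (N : ℝ) * ((N : ℝ) * γ + η)) ∧
      ∀ z : ℝ, f z = f zt → z = zt := by
  simp only
  set zt : ℝ := -γ * q / (η + (N : ℝ) * γ) with hztdef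
  set f : ℝ → ℝ := fun z =>
      -(σ ^ 2 * γ / 2) * ((z + ((N : ℝ) - 1) * zt + q) ^ 2
          - (((N : ℝ) - 1) / (N : ℝ)) * ((N : ℝ) * zt + q) ^ 2)
        - (η * σ ^ 2 / 2) * z ^ 2 with hfdef
  have hNpos : (0 : ℝ) < (N : ℝ) := by exact_mod_cast Nat.lt_of_lt_of_le Nat.zero_lt_one hN
  have hden : (0 : ℝ) < η + (N : ℝ) * γ := by positivity
  have hfz : ∀ z : ℝ, f z = -(σ ^ 2 * γ / 2) * ((z + ((N : ℝ) - 1) * zt + q) ^ 2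
          - (((N : ℝ) - 1) / (N : ℝ)) * ((N : ℝ) * zt + q) ^ 2)
        - (η * σ ^ 2 / 2) * z ^ 2 := fun z => rfl
  have hzt : zt * (η + (N : ℝ) * γ) = -γ * q := by
    rw [hztdef]; field_simp
  have hval : f zt = -(γ * η * σ ^ 2 * q ^ 2) / (2 * (N : ℝ) * ((N : ℝ) * γ + η)) := by
    rw [hfz, hztdef]
    field_simp
    ring
  have hA : ∀ z : ℝ, f z = f zt - (σ ^ 2 * (γ + η) / 2) * (z - zt) ^ 2 := by
    intro z
    rw [hfz, hfz, hztdef]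
    field_simp
    ring
  refine ⟨⟨⟨zt, hval⟩, ?_⟩, hval, ?_⟩
  · rintro y ⟨z, rfl⟩
    rw [hA z, hval]
    have : 0 ≤ σ ^ 2 * (γ + η) / 2 * (z - zt) ^ 2 := by positivity
    linarith
  · intro z hz
    rw [← hfz z, ← hfz zt, hA z] at hz
    have h0 : (σ ^ 2 * (γ + η) / 2) * (z - zt) ^ 2 = 0 := by linarith
    have hpos : 0 < σ ^ 2 * (γ + η) / 2 := by positivity
    have h2 : (z - zt) ^ 2 = 0 := (mul_eq_zero.mp h0).resolve_left (ne_of_gt hpos)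
    have := pow_eq_zero_iff (n := 2) (by norm_num) |>.mp h2
    linarith [sub_eq_zero.mp this]
end
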